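/- Fix a graph G, a function α : V → ℕ, and a set W ⊆ V. If in some α-orientation X₀ of G all edges between W and V∖W are directed away from W, then in every α-orientation of G all edges between W and V∖W are directed away from W (i.e., these edges are rigid). -/

import Mathlib

/-- `D` is an orientation of the simple graph `G`, given as the set of directed
edges: for every edge `{a,b}` of `G` exactly one of `(a,b)`, `(b,a)` belongs to `D`,
and `D` contains only pairs corresponding to edges of `G`. -/
def IsOrient {V : Type*} (G : SimpleGraph V) (D : Finset (V × V)) : Prop :=
  (∀ p ∈ D, G.Adj p.1 p.2) ∧ ∀ a b : V, G.Adj a b → ((a, b) ∈ D ↔ (b, a) ∉ D)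

/-- The out-degree of `v` in the orientation `D`. -/
def outD {V : Type*} [DecidableEq V] (D : Finset (V × V)) (v : V) : ℕ :=
  (D.filter (fun p => p.1 = v)).card

/-! Summed over `W`, the out-degrees count the arcs leaving a vertex of `W`, and this number
is fixed by `α`. The arcs with some endpoint in `W` correspond to the edges meeting `W`, so
their number does not depend on the orientation either. The difference of the two counts is
the number of arcs entering `W` from outside, which is therefore the same in every
`α`-orientation; in `X₀` it is zero. -/

namespace IsOrient

variable {V : Type*} {G : SimpleGraph V} {X Y : Finset (V × V)}

theorem swap_notMem (hX : IsOrient G X) {p : V × V} (hp : p ∈ X) : p.swap ∉ X :=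
  (hX.2 p.1 p.2 (hX.1 p hp)).mp hp

theorem swap_mem_of_notMem (hX : IsOrient G X) (hY : IsOrient G Y) {p : V × V}
    (hpX : p ∈ X) (hpY : p ∉ Y) : p.swap ∈ Y :=
  (hY.2 p.2 p.1 (hX.1 p hpX).symm).mpr hpY

theorem injOn_sym2Mk (hX : IsOrient G X) :
    Set.InjOn (Function.uncurry Sym2.mk) (X : Set (V × V)) := by
  intro p hp q hq hpq
  rcases Sym2.mk_eq_mk_iff.mp hpq with h | h
  · exact h
  · exact absurd (h ▸ hp) (hX.swap_notMem hq)

variable [DecidableEq V] (P : V × V → Prop) [DecidablePred P]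

theorem image_sym2Mk_filter_subset (hX : IsOrient G X) (hY : IsOrient G Y)
    (hP : ∀ p, P p → P p.swap) :
    (X.filter P).image (Function.uncurry Sym2.mk) ⊆
      (Y.filter P).image (Function.uncurry Sym2.mk) := by
  intro e he
  obtain ⟨p, hp, rfl⟩ := Finset.mem_image.mp he
  rw [Finset.mem_filter] at hp
  by_cases hpY : p ∈ Y
  · exact Finset.mem_image_of_mem _ (Finset.mem_filter.mpr ⟨hpY, hp.2⟩)
  · refine Finset.mem_image.mpr ⟨p.swap, Finset.mem_filter.mpr ?_, Sym2.eq_swap⟩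
    exact ⟨hX.swap_mem_of_notMem hY hp.1 hpY, hP p hp.2⟩

theorem card_filter_eq (hX : IsOrient G X) (hY : IsOrient G Y)
    (hP : ∀ p, P p → P p.swap) : (X.filter P).card = (Y.filter P).card := by
  have card_image (Z : Finset (V × V)) (hZ : IsOrient G Z) :
      ((Z.filter P).image (Function.uncurry Sym2.mk)).card = (Z.filter P).card :=
    Finset.card_image_of_injOn <|
      hZ.injOn_sym2Mk.mono (Finset.coe_subset.mpr (Finset.filter_subset P Z))
  rw [← card_image X hX, ← card_image Y hY,
    (image_sym2Mk_filter_subset P hX hY hP).antisymm (image_sym2Mk_filter_subset P hY hX hP)]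

end IsOrient

theorem Finset.card_filter_or {α : Type*} (s : Finset α) (P Q : α → Prop) [DecidablePred P]
    [DecidablePred Q] :
    (s.filter (fun a => P a ∨ Q a)).card =
      (s.filter P).card + (s.filter (fun a => ¬P a ∧ Q a)).card := by
  rw [← Finset.card_filter_add_card_filter_not (s := s.filter _) P, Finset.filter_filter,
    Finset.filter_filter]
  congr 2 <;> exact Finset.filter_congr fun a _ => by tauto

theorem cut_edges_rigid_general
    {V : Type*} [DecidableEq V]
    (G : SimpleGraph V) (α : V → ℕ) (W : Finset V)
    (X₀ : Finset (V × V)) (hX₀ : IsOrient G X₀)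
    (hα₀ : ∀ v, outD X₀ v = α v)
    (haway : ∀ p ∈ X₀, p.2 ∈ W → p.1 ∈ W) :
    ∀ X : Finset (V × V), IsOrient G X → (∀ v, outD X v = α v) →
      ∀ p ∈ X, p.2 ∈ W → p.1 ∈ W := by
  intro X hX hα p hp hp₂
  by_contra hp₁
  have hleaving :
      (X.filter (fun p => p.1 ∈ W)).card = (X₀.filter (fun p => p.1 ∈ W)).card := by
    rw [← Finset.sum_card_fiberwise_eq_card_filter, ← Finset.sum_card_fiberwise_eq_card_filter]
    exact Finset.sum_congr rfl fun v _ => (hα v).trans (hα₀ v).symm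
  have htouching := hX.card_filter_eq (fun p => p.1 ∈ W ∨ p.2 ∈ W) hX₀ (fun _ => Or.symm)
  have hentering₀ : X₀.filter (fun p => p.1 ∉ W ∧ p.2 ∈ W) = ∅ :=
    Finset.filter_eq_empty_iff.mpr fun q hq h => h.1 (haway q hq h.2)
  have hentering : (X.filter (fun p => p.1 ∉ W ∧ p.2 ∈ W)).card = 0 := by
    have hsplit := X.card_filter_or (fun p => p.1 ∈ W) (fun p => p.2 ∈ W)
    have hsplit₀ := X₀.card_filter_or (fun p => p.1 ∈ W) (fun p => p.2 ∈ W)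
    rw [hentering₀, Finset.card_empty] at hsplit₀
    omega
  exact Finset.notMem_empty p <|
    Finset.card_eq_zero.mp hentering ▸ Finset.mem_filter.mpr ⟨hp, hp₁, hp₂⟩

/-- If in some `α`-orientation `X₀` all edges between `W` and its complement are
directed away from `W`, then the same holds in every `α`-orientation: these edges
are rigid. -/
theorem cut_edges_rigid
    {V : Type*} [Fintype V] [DecidableEq V]
    (G : SimpleGraph V) (α : V → ℕ) (W : Finset V)
    (X₀ : Finset (V × V)) (hX₀ : IsOrient G X₀)
    (hα₀ : ∀ v, outD X₀ v = α v)
    (haway : ∀ p ∈ X₀, p.2 ∈ W → p.1 ∈ W) :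
    ∀ X : Finset (V × V), IsOrient G X → (∀ v, outD X v = α v) →
      ∀ p ∈ X, p.2 ∈ W → p.1 ∈ W :=
  cut_edges_rigid_general G α W X₀ hX₀ hα₀ haway
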